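/- arXiv:1101.4320 — 3 statements merged into one kernel-verified Lean document; each statement's English description precedes it below -/
import Mathlib

section
/- Let E be a nonzero complex normed space and let ‖·‖ be a c₀-norm on c₀ ⊗ E. Then for EVERY bounded linear operator T ∈ B(c₀) (not only compact ones), the operator T ⊗ id_E is bounded on (c₀ ⊗ E, ‖·‖), with operator norm exactly equal to ‖T‖. -/
/-!
Testing a `c₀`-norm against the rank-one operators `δ₀* ⊗ g` and `e_k* ⊗ δ₀` shows that it is a
cross norm: `‖g ⊗ x‖ = ‖g‖ ‖x‖`. For a cross norm, `(A ⊗ id) τ` depends continuously on `A` in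
the strong operator topology, because it does so on elementary tensors. The compact operators
`P_n T`, with `P_n` the truncation to the first `n` coordinates, converge strongly to `T` and have
norm at most `‖T‖`, so the bound passes to `T`. Conversely, applying `T ⊗ id` to `g ⊗ x` with
`x ≠ 0` shows that no constant smaller than `‖T‖` works.
-/

open ZeroAtInfty NormedSpace TensorProduct

/-- The standard basis vector `δₙ` of `c₀ = C₀(ℕ, ℂ)`. -/
noncomputable def c0delta (n : ℕ) : C₀(ℕ, ℂ) :=
  ⟨⟨fun m => if m = n then 1 else 0, continuous_of_discreteTopology⟩, by
    simp only [ContinuousMap.coe_mk]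
    rw [Filter.cocompact_eq_cofinite ℕ]
    apply Filter.Tendsto.congr' (f₁ := fun _ => (0 : ℂ))
    · rw [Filter.eventuallyEq_iff_exists_mem]
      exact ⟨{m | m ≠ n}, by simp [Filter.mem_cofinite], fun m hm => (if_neg hm).symm⟩
    · exact tendsto_const_nhds⟩

open Filter Topology

namespace ZeroAtInftyContinuousMap

variable {α β : Type*} [TopologicalSpace α] [SeminormedAddCommGroup β]

theorem norm_apply_le (f : C₀(α, β)) (x : α) : ‖f x‖ ≤ ‖f‖ :=
  f.toBCF.norm_coe_le_norm x

theorem norm_le_of_forall {f : C₀(α, β)} {C : ℝ} (hC : 0 ≤ C) (h : ∀ x, ‖f x‖ ≤ C) :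
    ‖f‖ ≤ C :=
  (BoundedContinuousFunction.norm_le hC).2 h

variable (𝕜 : Type*) [NontriviallyNormedField 𝕜] [NormedSpace 𝕜 β]

noncomputable def evalCLM (x : α) : C₀(α, β) →L[𝕜] β :=
  LinearMap.mkContinuous { toFun f := f x, map_add' _ _ := rfl, map_smul' _ _ := rfl } 1
    fun f => by simpa using norm_apply_le f x

@[simp]
theorem evalCLM_apply (x : α) (f : C₀(α, β)) : evalCLM 𝕜 x f = f x := rfl

theorem norm_evalCLM_le (x : α) : ‖evalCLM 𝕜 x (β := β)‖ ≤ 1 :=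
  LinearMap.mkContinuous_norm_le _ zero_le_one _

end ZeroAtInftyContinuousMap

open ZeroAtInftyContinuousMap

theorem ContinuousLinearMap.isCompactOperator_smulRight {𝕜 F G : Type*}
    [NontriviallyNormedField 𝕜] [LocallyCompactSpace 𝕜] [SeminormedAddCommGroup F]
    [NormedSpace 𝕜 F] [SeminormedAddCommGroup G] [NormedSpace 𝕜 G] (φ : F →L[𝕜] 𝕜) (g : G) :
    IsCompactOperator (φ.smulRight g) :=
  (isCompactOperator_of_locallyCompactSpace_dom φ).clm_comp (toSpanSingleton 𝕜 g)

theorem c0delta_apply (n m : ℕ) : c0delta n m = if m = n then 1 else 0 := rfl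

@[simp]
theorem c0delta_self (n : ℕ) : c0delta n n = 1 := if_pos rfl

theorem norm_c0delta_le (n : ℕ) : ‖c0delta n‖ ≤ 1 :=
  norm_le_of_forall zero_le_one fun m => by rw [c0delta_apply]; split_ifs <;> simp

noncomputable def c0trunc (n : ℕ) : C₀(ℕ, ℂ) →L[ℂ] C₀(ℕ, ℂ) :=
  ∑ m ∈ Finset.range n, (evalCLM ℂ m).smulRight (c0delta m)

theorem isCompactOperator_c0trunc (n : ℕ) : IsCompactOperator (c0trunc n) :=
  Submodule.sum_mem (compactOperator (RingHom.id ℂ) C₀(ℕ, ℂ) C₀(ℕ, ℂ))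
    fun _ _ => (evalCLM ℂ _).isCompactOperator_smulRight _

theorem c0trunc_apply (n : ℕ) (g : C₀(ℕ, ℂ)) (k : ℕ) :
    c0trunc n g k = if k < n then g k else 0 := by
  rw [← evalCLM_apply ℂ, c0trunc, sum_apply, map_sum]
  simp [c0delta_apply]

theorem norm_c0trunc_apply_le (n : ℕ) (g : C₀(ℕ, ℂ)) : ‖c0trunc n g‖ ≤ ‖g‖ :=
  norm_le_of_forall (norm_nonneg g) fun k => by
    rw [c0trunc_apply]
    split_ifs
    · exact norm_apply_le g k
    · simp

theorem norm_c0trunc_le (n : ℕ) : ‖c0trunc n‖ ≤ 1 :=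
  ContinuousLinearMap.opNorm_le_bound _ zero_le_one fun g => by
    simpa using norm_c0trunc_apply_le n g

theorem tendsto_c0trunc (g : C₀(ℕ, ℂ)) : Tendsto (fun n => c0trunc n g) atTop (𝓝 g) := by
  refine Metric.tendsto_atTop.2 fun ε hε => ?_
  have hg : Tendsto g atTop (𝓝 0) := by
    simpa [cocompact_eq_cofinite, Nat.cofinite_eq_atTop] using zero_at_infty g
  obtain ⟨n₀, hn₀⟩ := Metric.tendsto_atTop.1 hg (ε / 2) (half_pos hε)
  refine ⟨n₀, fun n hn => ?_⟩
  have : ‖c0trunc n g - g‖ ≤ ε / 2 := norm_le_of_forall (half_pos hε).le fun k => by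
    rw [coe_sub, Pi.sub_apply, c0trunc_apply]
    split_ifs with hk
    · simpa using (half_pos hε).le
    · simpa using (hn₀ k (by omega)).le
  rw [dist_eq_norm]
  linarith

namespace Seminorm

variable {𝕜 F E : Type*} [NontriviallyNormedField 𝕜] [SeminormedAddCommGroup F]
  [NormedSpace 𝕜 F] [SeminormedAddCommGroup E] [NormedSpace 𝕜 E] {p : Seminorm 𝕜 (F ⊗[𝕜] E)}

theorem tendsto_apply_rTensor_of_tendsto_apply (hp : ∀ g x, p (g ⊗ₜ x) ≤ ‖g‖ * ‖x‖)
    {ι : Type*} {l : Filter ι} {A : ι → F →ₗ[𝕜] F} (hA : ∀ g, Tendsto (fun i => A i g) l (𝓝 0))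
    (τ : F ⊗[𝕜] E) : Tendsto (fun i => p ((A i).rTensor E τ)) l (𝓝 0) := by
  induction τ using TensorProduct.induction_on with
  | zero => simpa using tendsto_const_nhds
  | tmul g x =>
    refine squeeze_zero (fun _ => apply_nonneg _ _) (fun i => hp (A i g) x) ?_
    simpa using ((hA g).norm.mul_const ‖x‖)
  | add σ τ hσ hτ =>
    refine squeeze_zero (fun _ => apply_nonneg _ _) (fun i => ?_) (by simpa using hσ.add hτ)
    rw [map_add]
    exact map_add_le_add p _ _

theorem apply_rTensor_le_of_tendsto (hp : ∀ g x, p (g ⊗ₜ x) ≤ ‖g‖ * ‖x‖)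
    {ι : Type*} {l : Filter ι} [l.NeBot] {A : ι → F →ₗ[𝕜] F} {T : F →ₗ[𝕜] F}
    (hA : ∀ g, Tendsto (fun i => A i g) l (𝓝 (T g))) {C : ℝ}
    (hC : ∀ i τ, p ((A i).rTensor E τ) ≤ C * p τ) (τ : F ⊗[𝕜] E) :
    p (T.rTensor E τ) ≤ C * p τ := by
  have hdiff := tendsto_apply_rTensor_of_tendsto_apply hp (A := fun i => A i - T)
    (fun g => by simpa using (hA g).sub_const (T g)) τ
  have hlim : Tendsto (fun i => p ((A i).rTensor E τ)) l (𝓝 (p (T.rTensor E τ))) := by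
    refine tendsto_iff_norm_sub_tendsto_zero.2 <| squeeze_zero (fun _ => norm_nonneg _)
      (fun i => ?_) hdiff
    rw [LinearMap.rTensor_sub, LinearMap.sub_apply]
    exact p.norm_sub_map_le_sub _ _
  exact le_of_tendsto' hlim fun i => hC i τ

end Seminorm

theorem Seminorm.norm_le_of_apply_rTensor_le {𝕜 F E : Type*} [NontriviallyNormedField 𝕜]
    [SeminormedAddCommGroup F] [NormedSpace 𝕜 F] [NormedAddCommGroup E] [NormedSpace 𝕜 E]
    [Nontrivial E] {p : Seminorm 𝕜 (F ⊗[𝕜] E)} (hp : ∀ g x, p (g ⊗ₜ x) = ‖g‖ * ‖x‖)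
    (T : F →L[𝕜] F) {C : ℝ} (hC₀ : 0 ≤ C) (hC : ∀ τ, p ((T : F →ₗ[𝕜] F).rTensor E τ) ≤ C * p τ) :
    ‖T‖ ≤ C := by
  obtain ⟨x, hx⟩ := exists_ne (0 : E)
  refine T.opNorm_le_bound hC₀ fun g => le_of_mul_le_mul_right ?_ (norm_pos_iff.2 hx)
  calc ‖T g‖ * ‖x‖ = p ((T : F →ₗ[𝕜] F).rTensor E (g ⊗ₜ x)) := (hp (T g) x).symm
    _ ≤ C * p (g ⊗ₜ x) := hC _
    _ = C * ‖g‖ * ‖x‖ := by rw [hp, mul_assoc]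

structure IsC0Seminorm {E : Type*} [SeminormedAddCommGroup E] [NormedSpace ℂ E]
    (p : Seminorm ℂ (C₀(ℕ, ℂ) ⊗[ℂ] E)) : Prop where
  apply_delta_tmul : ∀ x, p (c0delta 0 ⊗ₜ x) = ‖x‖
  apply_rTensor_le_of_isCompactOperator : ∀ T : C₀(ℕ, ℂ) →L[ℂ] C₀(ℕ, ℂ), IsCompactOperator T →
    ∀ τ, p ((T : C₀(ℕ, ℂ) →ₗ[ℂ] C₀(ℕ, ℂ)).rTensor E τ) ≤ ‖T‖ * p τ

namespace IsC0Seminorm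

variable {E : Type*} [SeminormedAddCommGroup E] [NormedSpace ℂ E]
  {p : Seminorm ℂ (C₀(ℕ, ℂ) ⊗[ℂ] E)}

theorem apply_tmul_le (hp : IsC0Seminorm p) (g : C₀(ℕ, ℂ)) (x : E) :
    p (g ⊗ₜ x) ≤ ‖g‖ * ‖x‖ := by
  have h := hp.apply_rTensor_le_of_isCompactOperator _
    ((evalCLM ℂ 0 : C₀(ℕ, ℂ) →L[ℂ] ℂ).isCompactOperator_smulRight g) (c0delta 0 ⊗ₜ x)
  simp only [LinearMap.rTensor_tmul, ContinuousLinearMap.coe_coe,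
    ContinuousLinearMap.smulRight_apply, evalCLM_apply, c0delta_self, one_smul,
    hp.apply_delta_tmul, ContinuousLinearMap.norm_smulRight_apply] at h
  refine h.trans (mul_le_mul_of_nonneg_right ?_ (norm_nonneg x))
  exact mul_le_of_le_one_left (norm_nonneg g) (norm_evalCLM_le ℂ 0)

theorem le_apply_tmul (hp : IsC0Seminorm p) (g : C₀(ℕ, ℂ)) (x : E) :
    ‖g‖ * ‖x‖ ≤ p (g ⊗ₜ x) := by
  have hcoord : ∀ k, ‖g k‖ * ‖x‖ ≤ p (g ⊗ₜ x) := fun k => by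
    have h := hp.apply_rTensor_le_of_isCompactOperator _
      ((evalCLM ℂ k : C₀(ℕ, ℂ) →L[ℂ] ℂ).isCompactOperator_smulRight (c0delta 0)) (g ⊗ₜ x)
    simp only [LinearMap.rTensor_tmul, ContinuousLinearMap.coe_coe,
      ContinuousLinearMap.smulRight_apply, evalCLM_apply, ← TensorProduct.smul_tmul',
      map_smul_eq_mul, hp.apply_delta_tmul, ContinuousLinearMap.norm_smulRight_apply] at h
    have hS : ‖(evalCLM ℂ k : C₀(ℕ, ℂ) →L[ℂ] ℂ)‖ * ‖c0delta 0‖ ≤ 1 :=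
      mul_le_one₀ (norm_evalCLM_le ℂ k) (norm_nonneg _) (norm_c0delta_le 0)
    exact h.trans (mul_le_of_le_one_left (apply_nonneg p _) hS)
  -- the coordinatewise bounds, scaled by `‖x‖`, bound the sup norm
  have h := norm_le_of_forall (f := (‖x‖ : ℂ) • g) (apply_nonneg p _) fun k => by
    simpa [mul_comm] using hcoord k
  simpa [norm_smul, mul_comm] using h

theorem apply_tmul (hp : IsC0Seminorm p) (g : C₀(ℕ, ℂ)) (x : E) : p (g ⊗ₜ x) = ‖g‖ * ‖x‖ :=
  (hp.apply_tmul_le g x).antisymm (hp.le_apply_tmul g x)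

theorem apply_rTensor_le (hp : IsC0Seminorm p) (T : C₀(ℕ, ℂ) →L[ℂ] C₀(ℕ, ℂ))
    (τ : C₀(ℕ, ℂ) ⊗[ℂ] E) : p ((T : C₀(ℕ, ℂ) →ₗ[ℂ] C₀(ℕ, ℂ)).rTensor E τ) ≤ ‖T‖ * p τ := by
  refine Seminorm.apply_rTensor_le_of_tendsto hp.apply_tmul_le
    (A := fun n => ((c0trunc n).comp T : C₀(ℕ, ℂ) →ₗ[ℂ] C₀(ℕ, ℂ)))
    (fun g => tendsto_c0trunc (T g)) (fun n σ => ?_) τ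
  have hnorm : ‖(c0trunc n).comp T‖ ≤ ‖T‖ :=
    (ContinuousLinearMap.opNorm_comp_le _ _).trans
      (mul_le_of_le_one_left (norm_nonneg T) (norm_c0trunc_le n))
  have hcompact := (isCompactOperator_c0trunc n).comp_clm T
  exact (hp.apply_rTensor_le_of_isCompactOperator _ hcompact σ).trans
    (mul_le_mul_of_nonneg_right hnorm (apply_nonneg p σ))

end IsC0Seminorm

theorem c0_norm_bounded_operators_general
    (E : Type*) [NormedAddCommGroup E] [NormedSpace ℂ E] [Nontrivial E]
    (N : TensorProduct ℂ C₀(ℕ, ℂ) E → ℝ)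
    -- `N` is a norm:
    (N_add : ∀ τ σ, N (τ + σ) ≤ N τ + N σ)
    (N_smul : ∀ (c : ℂ) τ, N (c • τ) = ‖c‖ * N τ)
    -- `N` is a `c₀`-norm:
    (N_delta : ∀ x : E, N (c0delta 0 ⊗ₜ[ℂ] x) = ‖x‖)
    (N_compact : ∀ T : C₀(ℕ, ℂ) →L[ℂ] C₀(ℕ, ℂ), IsCompactOperator T →
      ∀ τ, N (TensorProduct.map (T : C₀(ℕ, ℂ) →ₗ[ℂ] C₀(ℕ, ℂ)) (LinearMap.id) τ) ≤ ‖T‖ * N τ) :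
    ∀ T : C₀(ℕ, ℂ) →L[ℂ] C₀(ℕ, ℂ),
      (∀ τ, N (TensorProduct.map (T : C₀(ℕ, ℂ) →ₗ[ℂ] C₀(ℕ, ℂ)) (LinearMap.id) τ) ≤ ‖T‖ * N τ) ∧
      (∀ C : ℝ, 0 ≤ C →
        (∀ τ, N (TensorProduct.map (T : C₀(ℕ, ℂ) →ₗ[ℂ] C₀(ℕ, ℂ)) (LinearMap.id) τ) ≤ C * N τ) →
        ‖T‖ ≤ C) := by
  have hN : IsC0Seminorm (Seminorm.of N N_add N_smul) := ⟨N_delta, N_compact⟩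
  exact fun T => ⟨hN.apply_rTensor_le T,
    fun _ hC₀ hC => Seminorm.norm_le_of_apply_rTensor_le hN.apply_tmul T hC₀ hC⟩

/-- if `E` is a nonzero complex normed space and `N` is a `c₀`-norm on
`c₀ ⊗ E`, then for EVERY bounded linear operator `T ∈ B(c₀)` the operator `T ⊗ id_E` is
bounded on `(c₀ ⊗ E, N)` with norm exactly `‖T‖`: it satisfies `N((T ⊗ id)τ) ≤ ‖T‖ · N τ`,
and `‖T‖` is the least constant with this property. -/
theorem c0_norm_bounded_operators
    (E : Type*) [NormedAddCommGroup E] [NormedSpace ℂ E] [Nontrivial E]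
    (N : TensorProduct ℂ C₀(ℕ, ℂ) E → ℝ)
    -- `N` is a norm:
    (N_eq_zero : ∀ τ, N τ = 0 ↔ τ = 0)
    (N_add : ∀ τ σ, N (τ + σ) ≤ N τ + N σ)
    (N_smul : ∀ (c : ℂ) τ, N (c • τ) = ‖c‖ * N τ)
    -- `N` is a `c₀`-norm:
    (N_delta : ∀ x : E, N (c0delta 0 ⊗ₜ[ℂ] x) = ‖x‖)
    (N_compact : ∀ T : C₀(ℕ, ℂ) →L[ℂ] C₀(ℕ, ℂ), IsCompactOperator T →
      ∀ τ, N (TensorProduct.map (T : C₀(ℕ, ℂ) →ₗ[ℂ] C₀(ℕ, ℂ)) (LinearMap.id) τ) ≤ ‖T‖ * N τ) :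
    ∀ T : C₀(ℕ, ℂ) →L[ℂ] C₀(ℕ, ℂ),
      (∀ τ, N (TensorProduct.map (T : C₀(ℕ, ℂ) →ₗ[ℂ] C₀(ℕ, ℂ)) (LinearMap.id) τ) ≤ ‖T‖ * N τ) ∧
      (∀ C : ℝ, 0 ≤ C →
        (∀ τ, N (TensorProduct.map (T : C₀(ℕ, ℂ) →ₗ[ℂ] C₀(ℕ, ℂ)) (LinearMap.id) τ) ≤ C * N τ) →
        ‖T‖ ≤ C) :=
  c0_norm_bounded_operators_general E N N_add N_smul N_delta N_compact
end

section
/- Let E be a complex Banach space equipped with a multi-norm, and equip ℓ¹ with its minimum multi-norm. Assume that every multi-bounded operator T ∈ B(ℓ¹, E) (i.e. every bounded T with ‖T‖_mb = sup_k ‖T^{(k)}‖ < ∞) is weakly compact. Then every multi-bounded subset of E is relatively weakly compact (its closure in the weak topology of E is compact). -/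
open scoped ENNReal

/-- A multi-norm based on a complex normed space `E`: a sequence of norms `‖·‖ₙ` on `Eⁿ`
agreeing with the norm of `E` at level 1 and satisfying axioms (A1)-(A4). -/
structure MultiNorm (E : Type*) [NormedAddCommGroup E] [NormedSpace ℂ E] where
  toFun : (n : ℕ) → (Fin n → E) → ℝ
  eq_zero_iff : ∀ (n : ℕ) (x : Fin n → E), toFun n x = 0 ↔ x = 0
  add_le : ∀ (n : ℕ) (x y : Fin n → E), toFun n (x + y) ≤ toFun n x + toFun n y
  smul_eq : ∀ (n : ℕ) (c : ℂ) (x : Fin n → E), toFun n (c • x) = ‖c‖ * toFun n x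
  level_one : ∀ x : E, toFun 1 (fun _ => x) = ‖x‖
  perm : ∀ (n : ℕ) (σ : Equiv.Perm (Fin n)) (x : Fin n → E), toFun n (x ∘ σ) = toFun n x
  scal : ∀ (n : ℕ) (α : Fin n → ℂ) (x : Fin n → E),
    toFun n (fun i => α i • x i) ≤ (⨆ i, ‖α i‖) * toFun n x
  drop : ∀ (n : ℕ) (x : Fin n → E), toFun (n + 1) (Fin.snoc x 0) = toFun n x
  dup : ∀ (n : ℕ) (x : Fin (n + 1) → E),
    toFun (n + 2) (Fin.snoc x (x (Fin.last n))) = toFun (n + 1) x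

/-- The multi-bound `mb(B) ∈ [0,∞]` of a subset `B` of a multi-normed space. -/
noncomputable def MultiNorm.mbSet {E : Type*} [NormedAddCommGroup E] [NormedSpace ℂ E]
    (M : MultiNorm E) (B : Set E) : ℝ≥0∞ :=
  ⨆ (n : ℕ) (x : Fin n → E) (_ : ∀ i, x i ∈ B), ENNReal.ofReal (M.toFun n x)

/-!
A multi-bounded set `B` is bounded, and for a sequence `(xₙ)` in `B` the operator `T a = ∑ aₙ xₙ`
on `ℓ¹` is multi-bounded: `T` maps the unit ball into the closed convex hull of the balanced hull
of `B`, and on tuples from that hull the `k`-th multi-norm is still at most `mb(B)`, by (A2) and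
because it is a continuous seminorm on `Eᵏ`. So `T` is weakly compact and `xₙ = T eₙ` has a weak
cluster point.

Whitley's proof of the Eberlein–Šmulian theorem then gives relative weak compactness. By
Banach–Alaoglu it suffices that each weak-* cluster point `Φ` of `B` in the bidual lies in `E`.
Choose `bₙ ∈ B` approximating `Φ` ever better on finite sets `Dₙ ⊆ E*` that norm (up to a factor 2)
the span of `Φ, b₀, …, bₙ₋₁`. A weak cluster point `x` of `(bₙ)` lies in the closed span of the
`bₙ` (Mazur) and agrees with `Φ` on every `Dₙ`; since these norm the closure of the span of `Φ`
and the `bₙ`, which contains `Φ - x`, we get `Φ = x`.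
-/

open Filter Topology Set
open scoped Pointwise lp

theorem Convex.sum_smul_mem_of_zero_mem {𝕜 E ι : Type*} [Field 𝕜] [LinearOrder 𝕜]
    [IsStrictOrderedRing 𝕜] [AddCommGroup E] [Module 𝕜 E] {K : Set E} (hK : Convex 𝕜 K)
    (h0 : (0 : E) ∈ K) {s : Finset ι} {w : ι → 𝕜} {z : ι → E}
    (hw₀ : ∀ i ∈ s, 0 ≤ w i) (hw₁ : ∑ i ∈ s, w i ≤ 1) (hz : ∀ i ∈ s, z i ∈ K) :
    ∑ i ∈ s, w i • z i ∈ K := by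
  rcases (Finset.sum_nonneg hw₀).eq_or_lt with ht | ht
  · rwa [Finset.sum_eq_zero fun i hi => by
      rw [(Finset.sum_eq_zero_iff_of_nonneg hw₀).1 ht.symm i hi, zero_smul]]
  · rw [← smul_inv_smul₀ ht.ne' (∑ i ∈ s, w i • z i)]
    exact hK.smul_mem_of_zero_mem h0 (hK.centerMass_mem hw₀ ht hz) ⟨ht.le, hw₁⟩

theorem sum_smul_mem_convexHull_balancedHull {𝕜 E ι : Type*} [RCLike 𝕜] [AddCommGroup E]
    [Module 𝕜 E] [Module ℝ E] [IsScalarTower ℝ 𝕜 E] {S : Set E} (hS : S.Nonempty)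
    {s : Finset ι} {a : ι → 𝕜} {u : ι → E} (ha : ∑ i ∈ s, ‖a i‖ ≤ 1) (hu : ∀ i ∈ s, u i ∈ S) :
    ∑ i ∈ s, a i • u i ∈ convexHull ℝ (balancedHull 𝕜 S) := by
  have h0 : (0 : E) ∈ convexHull ℝ (balancedHull 𝕜 S) :=
    subset_convexHull ℝ _ <| (balancedHull.balanced S).zero_mem (hS.mono (subset_balancedHull 𝕜))
  have hpolar : ∀ i, a i • u i = ‖a i‖ • (a i / ‖a i‖) • u i := by
    intro i
    rcases eq_or_ne (a i) 0 with h | h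
    · simp [h]
    · rw [← smul_assoc, RCLike.real_smul_eq_coe_mul, mul_div_cancel₀ _ (by simpa using h)]
  rw [Finset.sum_congr rfl fun i _ => hpolar i]
  refine (convex_convexHull ℝ _).sum_smul_mem_of_zero_mem h0 (fun i _ => norm_nonneg _) ha
    fun i hi => subset_convexHull ℝ _ <| mem_balancedHull_iff.2 ⟨_, ?_, smul_mem_smul_set (hu i hi)⟩
  rw [norm_div, RCLike.norm_ofReal, abs_norm]
  exact div_self_le_one _

theorem ConvexOn.le_of_forall_mem_closure_convexHull {ι E : Type*} [Fintype ι] [AddCommGroup E]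
    [Module ℝ E] [TopologicalSpace E] {f : (ι → E) → ℝ} (hf : ConvexOn ℝ (univ : Set (ι → E)) f)
    (hc : Continuous f) {S : Set E} {c : ℝ} (h : ∀ x : ι → E, (∀ i, x i ∈ S) → f x ≤ c)
    {x : ι → E} (hx : ∀ i, x i ∈ closure (convexHull ℝ S)) : f x ≤ c := by
  have hsub : closure (convexHull ℝ (univ.pi fun _ => S)) ⊆ {x | f x ≤ c} :=
    closure_minimal
      (convexHull_min (fun x hx => h x fun i => hx i (mem_univ i)) (by simpa using hf.convex_le c))
      (isClosed_le hc continuous_const)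
  rw [convexHull_pi, closure_pi_set] at hsub
  exact hsub fun i _ => hx i

namespace lp

section

variable {α 𝕜 E : Type*} [NontriviallyNormedField 𝕜] [NormedAddCommGroup E] [NormedSpace 𝕜 E]

lemma summable_norm_one (a : ℓ¹(α, 𝕜)) : Summable fun i => ‖a i‖ := by
  simpa using a.2.summable

lemma tsum_norm_one (a : ℓ¹(α, 𝕜)) : ∑' i, ‖a i‖ = ‖a‖ := by
  rw [norm_eq_tsum_rpow (by simp)]
  simp

variable {x : α → E} {C : ℝ}

lemma summable_norm_smul_of_norm_le (hx : ∀ i, ‖x i‖ ≤ C) (a : ℓ¹(α, 𝕜)) :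
    Summable fun i => ‖a i • x i‖ :=
  .of_nonneg_of_le (fun _ => norm_nonneg _) (fun i => by rw [norm_smul]; gcongr; exact hx i)
    ((summable_norm_one a).mul_right C)

variable [CompleteSpace E]

noncomputable def tsumSmulCLM (x : α → E) (C : ℝ) (hx : ∀ i, ‖x i‖ ≤ C) : ℓ¹(α, 𝕜) →L[𝕜] E :=
  LinearMap.mkContinuous
    { toFun a := ∑' i, a i • x i
      map_add' a b := by
        simp only [coeFn_add, Pi.add_apply, add_smul]
        exact (summable_norm_smul_of_norm_le hx a).of_norm.tsum_add
          (summable_norm_smul_of_norm_le hx b).of_norm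
      map_smul' c a := by
        simp only [coeFn_smul, Pi.smul_apply, smul_eq_mul, mul_smul, RingHom.id_apply]
        exact (summable_norm_smul_of_norm_le hx a).of_norm.tsum_const_smul c }
    C fun a => by
      have hs := (summable_norm_one a).mul_right C
      calc ‖∑' i, a i • x i‖ ≤ ∑' i, ‖a i • x i‖ :=
            norm_tsum_le_tsum_norm (summable_norm_smul_of_norm_le hx a)
        _ ≤ ∑' i, ‖a i‖ * C :=
            (summable_norm_smul_of_norm_le hx a).tsum_le_tsum
              (fun i => by rw [norm_smul]; gcongr; exact hx i) hs
        _ = C * ‖a‖ := by rw [tsum_mul_right, tsum_norm_one, mul_comm]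

variable (hx : ∀ i, ‖x i‖ ≤ C)

lemma hasSum_tsumSmulCLM (a : ℓ¹(α, 𝕜)) :
    HasSum (fun i => a i • x i) (tsumSmulCLM x C hx a) :=
  (summable_norm_smul_of_norm_le hx a).of_norm.hasSum

lemma tsumSmulCLM_single [DecidableEq α] (i : α) :
    tsumSmulCLM x C hx (lp.single 1 i (1 : 𝕜)) = x i :=
  ((hasSum_tsumSmulCLM hx _).unique (hasSum_single i fun j hj => by simp [hj])).trans (by simp)

end

variable {α 𝕜 E : Type*} [RCLike 𝕜] [NormedAddCommGroup E] [NormedSpace 𝕜 E] [CompleteSpace E]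
  [NormedSpace ℝ E] [IsScalarTower ℝ 𝕜 E] {x : α → E} {C : ℝ} (hx : ∀ i, ‖x i‖ ≤ C)

lemma tsumSmulCLM_mem_closure_convexHull_balancedHull [Nonempty α] {a : ℓ¹(α, 𝕜)}
    (ha : ‖a‖ ≤ 1) : tsumSmulCLM x C hx a ∈ closure (convexHull ℝ (balancedHull 𝕜 (range x))) := by
  refine isClosed_closure.mem_of_tendsto (hasSum_tsumSmulCLM hx a) (.of_forall fun s => ?_)
  refine subset_closure (sum_smul_mem_convexHull_balancedHull (range_nonempty x) ?_
    fun i _ => mem_range_self i)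
  calc ∑ i ∈ s, ‖a i‖ ≤ ∑' i, ‖a i‖ :=
        (summable_norm_one a).sum_le_tsum s fun i _ => norm_nonneg _
    _ ≤ 1 := (tsum_norm_one a).trans_le ha

end lp

namespace MultiNorm

variable {E : Type*} [NormedAddCommGroup E] [NormedSpace ℂ E] (M : MultiNorm E)

noncomputable def seminorm (n : ℕ) : Seminorm ℂ (Fin n → E) :=
  Seminorm.of (M.toFun n) (M.add_le n) (M.smul_eq n)

lemma toFun_const (n : ℕ) (u : E) : M.toFun (n + 1) (fun _ => u) = ‖u‖ := by
  induction n with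
  | zero => exact M.level_one u
  | succ n ih =>
    have hsnoc : Fin.snoc (fun _ : Fin (n + 1) => u) u = fun _ => u := by
      ext i; induction i using Fin.lastCases <;> simp
    simpa [hsnoc, ih] using M.dup n fun _ => u

lemma toFun_single_le {n : ℕ} (i : Fin n) (u : E) : M.toFun n (Pi.single i u) ≤ ‖u‖ := by
  obtain ⟨m, rfl⟩ : ∃ m, n = m + 1 := Nat.exists_eq_succ_of_ne_zero (Fin.pos i).ne'
  have hsingle : Pi.single i u = fun j => (Pi.single i (1 : ℂ) : Fin (m + 1) → ℂ) j • u := by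
    ext j; by_cases hj : j = i <;> simp [hj]
  have hsup : (⨆ j, ‖(Pi.single i (1 : ℂ) : Fin (m + 1) → ℂ) j‖) ≤ 1 :=
    ciSup_le fun j => by by_cases hj : j = i <;> simp [hj]
  calc M.toFun (m + 1) (Pi.single i u)
      ≤ (⨆ j, ‖(Pi.single i (1 : ℂ) : Fin (m + 1) → ℂ) j‖) * M.toFun (m + 1) (fun _ => u) := by
        rw [hsingle]; exact M.scal _ _ _
    _ ≤ ‖u‖ := by rw [M.toFun_const]; exact mul_le_of_le_one_left (norm_nonneg u) hsup

lemma toFun_le_sum_norm {n : ℕ} (x : Fin n → E) : M.toFun n x ≤ ∑ i, ‖x i‖ := by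
  calc M.toFun n x = M.seminorm n (∑ i, Pi.single i (x i)) := by rw [Finset.univ_sum_single]; rfl
    _ ≤ ∑ i, M.seminorm n (Pi.single i (x i)) :=
        Finset.le_sum_of_subadditive _ (map_zero _).le (map_add_le_add _) _ _
    _ ≤ ∑ i, ‖x i‖ := Finset.sum_le_sum fun i _ => M.toFun_single_le i (x i)

lemma continuous_seminorm (n : ℕ) : Continuous (M.seminorm n) := by
  refine Seminorm.continuous_of_le (q := (n : NNReal) • normSeminorm ℂ (Fin n → E))
    (by exact continuous_norm.const_smul (n : NNReal)) fun x => ?_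
  calc M.seminorm n x ≤ ∑ i, ‖x i‖ := M.toFun_le_sum_norm x
    _ ≤ ∑ _i : Fin n, ‖x‖ := Finset.sum_le_sum fun i _ => norm_le_pi_norm x i
    _ = ((n : NNReal) • normSeminorm ℂ (Fin n → E)) x := by simp [NNReal.smul_def]

variable {M} {B : Set E}

lemma toFun_le_mbSet (hB : M.mbSet B ≠ ⊤) {n : ℕ} {x : Fin n → E} (hx : ∀ i, x i ∈ B) :
    M.toFun n x ≤ (M.mbSet B).toReal :=
  (ENNReal.ofReal_le_iff_le_toReal hB).1 (le_iSup₂_of_le n x (le_iSup_of_le hx le_rfl))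

lemma norm_le_mbSet (hB : M.mbSet B ≠ ⊤) {u : E} (hu : u ∈ B) : ‖u‖ ≤ (M.mbSet B).toReal :=
  M.level_one u ▸ toFun_le_mbSet hB fun _ => hu

lemma isBounded_of_mbSet_ne_top (hB : M.mbSet B ≠ ⊤) : Bornology.IsBounded B :=
  isBounded_iff_forall_norm_le.2 ⟨_, fun _ => norm_le_mbSet hB⟩

lemma toFun_le_mbSet_of_mem_balancedHull (hB : M.mbSet B ≠ ⊤) {n : ℕ} {x : Fin n → E}
    (hx : ∀ i, x i ∈ balancedHull ℂ B) : M.toFun n x ≤ (M.mbSet B).toReal := by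
  choose r hr b hb hrb using fun i => mem_balancedHull_iff.1 (hx i)
  have hx' : x = fun i => r i • b i := funext fun i => (hrb i).symm
  calc M.toFun n x ≤ (⨆ i, ‖r i‖) * M.toFun n b := hx' ▸ M.scal n r b
    _ ≤ (M.mbSet B).toReal :=
        (mul_le_of_le_one_left (apply_nonneg (M.seminorm n) b) (Real.iSup_le hr zero_le_one)).trans
          (toFun_le_mbSet hB hb)

lemma toFun_le_mbSet_of_mem_closure_convexHull (hB : M.mbSet B ≠ ⊤) {n : ℕ} {x : Fin n → E}
    (hx : ∀ i, x i ∈ closure (convexHull ℝ (balancedHull ℂ B))) :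
    M.toFun n x ≤ (M.mbSet B).toReal :=
  (M.seminorm n).convexOn.le_of_forall_mem_closure_convexHull (M.continuous_seminorm n)
    (fun _ => toFun_le_mbSet_of_mem_balancedHull hB) hx

lemma toFun_tsumSmulCLM_le [CompleteSpace E] (hB : M.mbSet B ≠ ⊤) {x : ℕ → E}
    (hx : ∀ n, x n ∈ B) {k : ℕ} {a : Fin k → ℓ¹(ℕ, ℂ)} (ha : ∀ i, ‖a i‖ ≤ 1) :
    M.toFun k (fun i => lp.tsumSmulCLM x _ (fun n => norm_le_mbSet hB (hx n)) (a i)) ≤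
      (M.mbSet B).toReal :=
  toFun_le_mbSet_of_mem_closure_convexHull hB fun i =>
    closure_mono (convexHull_mono (balancedHull_mono (range_subset_iff.2 hx)))
      (lp.tsumSmulCLM_mem_closure_convexHull_balancedHull _ (ha i))

end MultiNorm

section Norming

variable {𝕜 : Type*} [RCLike 𝕜]

theorem ContinuousLinearMap.exists_finset_norming {F G : Type*} [NormedAddCommGroup F]
    [NormedSpace 𝕜 F] [NormedAddCommGroup G] [NormedSpace 𝕜 G] (V : Submodule 𝕜 (F →L[𝕜] G))
    [FiniteDimensional 𝕜 V] :
    ∃ D : Finset F, (∀ f ∈ D, ‖f‖ ≤ 1) ∧ ∀ ψ ∈ V, ∃ f ∈ D, ‖ψ‖ ≤ 2 * ‖ψ f‖ := by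
  classical
  let U : Metric.closedBall (0 : F) 1 → Set V := fun f =>
    {ψ | ‖(ψ : F →L[𝕜] G)‖ < 2 * ‖(ψ : F →L[𝕜] G) f‖}
  have hU : ∀ f, IsOpen (U f) := fun f =>
    isOpen_lt (continuous_norm.comp continuous_subtype_val) <| continuous_const.mul
      ((ContinuousLinearMap.apply 𝕜 G (f : F)).continuous.comp continuous_subtype_val).norm
  have hcover : Metric.sphere (0 : V) 1 ⊆ ⋃ f, U f := by
    intro ψ hψ
    have h1 : ‖(ψ : F →L[𝕜] G)‖ = 1 := by simpa using hψ
    obtain ⟨f, hf, hψf⟩ :=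
      (ψ : F →L[𝕜] G).exists_lt_apply_of_lt_opNorm (r := 1 / 2) (by rw [h1]; norm_num)
    exact mem_iUnion.2 ⟨⟨f, mem_closedBall_zero_iff.2 hf.le⟩, by
      show ‖(ψ : F →L[𝕜] G)‖ < 2 * ‖(ψ : F →L[𝕜] G) f‖
      rw [h1]; linarith⟩
  obtain ⟨t, ht⟩ := (isCompact_sphere (0 : V) 1).elim_finite_subcover U hU hcover
  refine ⟨insert 0 (t.image Subtype.val), ?_, fun ψ hψ => ?_⟩
  · simp only [Finset.mem_insert, Finset.mem_image, forall_eq_or_imp, norm_zero, zero_le_one,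
      true_and]
    rintro _ ⟨f, -, rfl⟩
    exact mem_closedBall_zero_iff.1 f.2
  rcases eq_or_ne ψ 0 with rfl | hψ0
  · exact ⟨0, Finset.mem_insert_self _ _, by simp⟩
  have hn : 0 < ‖ψ‖ := norm_pos_iff.2 hψ0
  let c : 𝕜 := ((‖ψ‖⁻¹ : ℝ) : 𝕜)
  have hc : ‖c‖ = ‖ψ‖⁻¹ := by simp [c]
  obtain ⟨f, hft, hf⟩ := mem_iUnion₂.1 (@ht (c • ⟨ψ, hψ⟩) (by
    rw [mem_sphere_zero_iff_norm]
    show ‖c • ψ‖ = 1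
    rw [norm_smul, hc, inv_mul_cancel₀ hn.ne']))
  refine ⟨f, Finset.mem_insert_of_mem (Finset.mem_image_of_mem Subtype.val hft), ?_⟩
  have hf' : ‖c‖ * ‖ψ‖ < ‖c‖ * (2 * ‖ψ f‖) := by
    simpa [U, norm_smul, mul_left_comm] using hf
  exact (lt_of_mul_lt_mul_left hf' (norm_nonneg _)).le

theorem ContinuousLinearMap.eq_of_mem_closure_of_norming {F G : Type*} [NormedAddCommGroup F]
    [NormedSpace 𝕜 F] [NormedAddCommGroup G] [NormedSpace 𝕜 G] {W : Submodule 𝕜 (F →L[𝕜] G)}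
    {D : Set F} (hD : ∀ f ∈ D, ‖f‖ ≤ 1) (hW : ∀ η ∈ W, ∃ f ∈ D, ‖η‖ ≤ 2 * ‖η f‖)
    {ξ ζ : F →L[𝕜] G} (hξ : ξ ∈ W) (hζ : ζ ∈ closure (W : Set (F →L[𝕜] G)))
    (hξζ : ∀ f ∈ D, ξ f = ζ f) : ξ = ζ := by
  refine sub_eq_zero.1 (norm_le_zero_iff.1 (le_of_forall_pos_le_add fun ε hε => ?_))
  obtain ⟨η, hηW, hζη⟩ := Metric.mem_closure_iff.1 hζ (ε / 3) (by positivity)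
  obtain ⟨f, hfD, hξηf⟩ := hW (ξ - η) (W.sub_mem hξ hηW)
  rw [dist_eq_norm] at hζη
  have hf : ‖(ξ - η) f‖ ≤ ‖ζ - η‖ :=
    calc ‖(ξ - η) f‖ = ‖(ζ - η) f‖ := by simp [hξζ f hfD]
      _ ≤ ‖ζ - η‖ * ‖f‖ := le_opNorm _ _
      _ ≤ ‖ζ - η‖ := mul_le_of_le_one_right (norm_nonneg _) (hD f hfD)
  linarith [norm_sub_le_norm_sub_add_norm_sub ξ η ζ, norm_sub_rev η ζ]

end Norming

namespace NormedSpace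

variable {𝕜 E : Type*} [RCLike 𝕜] [NormedAddCommGroup E] [NormedSpace 𝕜 E]

theorem exists_seq_norming_of_forall_finset_approx {B : Set E}
    (Φ : StrongDual 𝕜 (StrongDual 𝕜 E))
    (hΦ : ∀ (H : Finset (StrongDual 𝕜 E)) (ε : ℝ), 0 < ε → ∃ b ∈ B, ∀ f ∈ H, ‖Φ f - f b‖ < ε) :
    ∃ (b : ℕ → E) (D : Set (StrongDual 𝕜 E)) (W : Submodule 𝕜 (StrongDual 𝕜 (StrongDual 𝕜 E))),
      (∀ n, b n ∈ B) ∧ (∀ f ∈ D, ‖f‖ ≤ 1) ∧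
      (∀ f ∈ D, Tendsto (fun n => f (b n)) atTop (𝓝 (Φ f))) ∧
      Φ ∈ W ∧ (∀ n, inclusionInDoubleDual 𝕜 E (b n) ∈ W) ∧
      ∀ η ∈ W, ∃ f ∈ D, ‖η‖ ≤ 2 * ‖η f‖ := by
  classical
  choose norming hnorm1 hnorm using fun s : Finset (StrongDual 𝕜 (StrongDual 𝕜 E)) =>
    ContinuousLinearMap.exists_finset_norming
      (Submodule.span 𝕜 (s : Set (StrongDual 𝕜 (StrongDual 𝕜 E))))
  choose pick hpickB hpick using fun (H : Finset (StrongDual 𝕜 E)) (n : ℕ) =>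
    hΦ H (1 / (n + 1)) Nat.one_div_pos_of_nat
  -- `(state n).1` is `Φ` together with `b₀, …, bₙ₋₁` embedded in the bidual; `(state n).2`
  -- collects the norming sets of `(state 0).1, …, (state n).1`, on which `bₙ` approximates `Φ`
  -- to within `1 / (n + 1)`.
  let state : ℕ → Finset (StrongDual 𝕜 (StrongDual 𝕜 E)) × Finset (StrongDual 𝕜 E) := fun n =>
    Nat.rec ({Φ}, norming {Φ}) (fun n s =>
      let F := insert (inclusionInDoubleDual 𝕜 E (pick s.2 n)) s.1
      (F, s.2 ∪ norming F)) n
  let b n := pick (state n).2 n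
  have hF : Monotone fun n =>
      Submodule.span 𝕜 ((state n).1 : Set (StrongDual 𝕜 (StrongDual 𝕜 E))) :=
    monotone_nat_of_le_succ fun n => Submodule.span_mono (Finset.subset_insert _ _)
  have hH : Monotone fun n => (state n).2 :=
    monotone_nat_of_le_succ fun n => Finset.subset_union_left
  have hnormH : ∀ n, norming (state n).1 ⊆ (state n).2 := by
    rintro (_ | n)
    exacts [subset_rfl, Finset.subset_union_right]
  refine ⟨b, ⋃ n, (norming (state n).1 : Set _), ⨆ n, Submodule.span 𝕜 ((state n).1 : Set _),
    fun n => hpickB _ _, ?_, ?_, ?_, ?_, ?_⟩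
  · simp only [mem_iUnion, Finset.mem_coe]
    exact fun f ⟨n, hf⟩ => hnorm1 _ f hf
  · simp only [mem_iUnion, Finset.mem_coe]
    rintro f ⟨m, hf⟩
    rw [tendsto_iff_norm_sub_tendsto_zero]
    refine squeeze_zero' (.of_forall fun n => norm_nonneg _) ?_
      tendsto_one_div_add_atTop_nhds_zero_nat
    filter_upwards [eventually_ge_atTop m] with n hn
    rw [norm_sub_rev]
    exact (hpick _ n f (hH hn (hnormH m hf))).le
  · exact Submodule.mem_iSup_of_mem 0 (Submodule.subset_span (Finset.mem_singleton_self Φ))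
  · exact fun n => Submodule.mem_iSup_of_mem (n + 1)
      (Submodule.subset_span (Finset.mem_insert_self _ _))
  · intro η hη
    obtain ⟨n, hn⟩ := (Submodule.mem_iSup_of_directed _ hF.directed_le).1 hη
    obtain ⟨f, hf, hηf⟩ := hnorm _ η hn
    exact ⟨f, mem_iUnion.2 ⟨n, hf⟩, hηf⟩

theorem exists_forall_norm_sub_lt_of_mem_closure {B : Set E} {Φ : WeakDual 𝕜 (StrongDual 𝕜 E)}
    (hΦ : Φ ∈ closure (inclusionInDoubleDualWeak 𝕜 E '' (toWeakSpace 𝕜 E '' B)))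
    (H : Finset (StrongDual 𝕜 E)) {ε : ℝ} (hε : 0 < ε) :
    ∃ b ∈ B, ∀ f ∈ H, ‖Φ f - f b‖ < ε := by
  have hU : IsOpen (⋂ f ∈ H, {Ψ : WeakDual 𝕜 (StrongDual 𝕜 E) | ‖Ψ f - Φ f‖ < ε}) :=
    isOpen_biInter_finset fun f _ =>
      isOpen_lt ((WeakDual.eval_continuous f).sub continuous_const).norm continuous_const
  obtain ⟨_, hΨ, _, ⟨b, hb, rfl⟩, rfl⟩ := mem_closure_iff.1 hΦ _ hU
    (mem_iInter₂.2 fun f _ => by simpa using hε)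
  exact ⟨b, hb, fun f hf => by rw [norm_sub_rev]; exact mem_iInter₂.1 hΨ f hf⟩

variable [NormedSpace ℝ E] [IsScalarTower ℝ 𝕜 E]

theorem mem_range_inclusionInDoubleDualWeak_of_mapClusterPt {B : Set E}
    (hB : ∀ b : ℕ → E, (∀ n, b n ∈ B) →
      ∃ z : WeakSpace 𝕜 E, MapClusterPt z atTop fun n => toWeakSpace 𝕜 E (b n))
    {Φ : WeakDual 𝕜 (StrongDual 𝕜 E)}
    (hΦ : Φ ∈ closure (inclusionInDoubleDualWeak 𝕜 E '' (toWeakSpace 𝕜 E '' B))) :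
    Φ ∈ range (inclusionInDoubleDualWeak 𝕜 E) := by
  obtain ⟨b, D, W, hbB, hD1, hDlim, hΦW, hbW, hWnorm⟩ :=
    exists_seq_norming_of_forall_finset_approx (B := B) (WeakDual.toStrongDual Φ)
      fun H _ hε => exists_forall_norm_sub_lt_of_mem_closure hΦ H hε
  obtain ⟨z, hz⟩ := hB b hbB
  set x := (toWeakSpace 𝕜 E).symm z
  have hxD : ∀ f ∈ D, Φ f = f x := fun f hf => by
    have hf_cont : Continuous fun w : WeakSpace 𝕜 E => f ((toWeakSpace 𝕜 E).symm w) :=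
      WeakBilin.eval_continuous _ f
    have hclu := hz.continuousAt_comp hf_cont.continuousAt
    exact (eq_of_nhds_neBot (ClusterPt.mono hclu (hDlim f hf))).symm
  have hx_span : x ∈ closure (Submodule.span 𝕜 (range b) : Set E) := by
    have hconv : Convex ℝ (Submodule.span 𝕜 (range b) : Set E) :=
      ((Submodule.span 𝕜 (range b)).restrictScalars ℝ).convex
    have hz' : z ∈ closure (toWeakSpace 𝕜 E '' (Submodule.span 𝕜 (range b) : Set E)) :=
      closure_mono (range_subset_iff.2 fun n => mem_image_of_mem _ (Submodule.subset_span
        (mem_range_self n))) (hz.clusterPt.mem_closure_of_mem _ range_mem_map)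
    rw [← hconv.toWeakSpace_closure 𝕜] at hz'
    obtain ⟨y, hy, rfl⟩ := hz'
    simpa [x] using hy
  have hJx : inclusionInDoubleDual 𝕜 E x ∈ closure (W : Set (StrongDual 𝕜 (StrongDual 𝕜 E))) :=
    map_mem_closure (inclusionInDoubleDual 𝕜 E).continuous hx_span fun _ hy =>
      (Submodule.span_le (p := W.comap (inclusionInDoubleDual 𝕜 E).toLinearMap)).2
        (range_subset_iff.2 hbW) hy
  have hΦx := ContinuousLinearMap.eq_of_mem_closure_of_norming hD1 hWnorm hΦW hJx hxD
  exact ⟨z, DFunLike.ext _ _ fun f => (congrArg (· f) hΦx).symm⟩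

theorem isCompact_closure_toWeakSpace_of_mapClusterPt {B : Set E} (hbdd : Bornology.IsBounded B)
    (hB : ∀ b : ℕ → E, (∀ n, b n ∈ B) →
      ∃ z : WeakSpace 𝕜 E, MapClusterPt z atTop fun n => toWeakSpace 𝕜 E (b n)) :
    IsCompact (closure (toWeakSpace 𝕜 E '' B)) :=
  isCompact_closure_of_isBounded 𝕜 E _ (by rwa [(toWeakSpace 𝕜 E).injective.preimage_image])
    fun _ hΦ => mem_range_inclusionInDoubleDualWeak_of_mapClusterPt hB hΦ

end NormedSpace

/-- let `E` be a complex Banach space with a multi-norm, and equip ℓ¹ with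
its minimum multi-norm. If every multi-bounded operator `T ∈ B(ℓ¹, E)` is weakly compact,
then every multi-bounded subset of `E` is relatively weakly compact. -/
theorem multibounded_subsets_relatively_weakly_compact
    (E : Type*) [NormedAddCommGroup E] [NormedSpace ℂ E] [CompleteSpace E] (M : MultiNorm E)
    (h : ∀ T : lp (fun _ : ℕ => ℂ) 1 →L[ℂ] E,
      (⨆ (k : ℕ) (x : Fin k → lp (fun _ : ℕ => ℂ) 1) (_ : (⨆ i, ‖x i‖) ≤ 1),
        ENNReal.ofReal (M.toFun k fun i => T (x i))) < ⊤ →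
      IsCompact (closure (toWeakSpace ℂ E '' (T '' Metric.closedBall 0 1)))) :
    ∀ B : Set E, M.mbSet B < ⊤ → IsCompact (closure (toWeakSpace ℂ E '' B)) := by
  intro B hB
  refine NormedSpace.isCompact_closure_toWeakSpace_of_mapClusterPt
    (MultiNorm.isBounded_of_mbSet_ne_top hB.ne) fun x hx => ?_
  let T := lp.tsumSmulCLM (𝕜 := ℂ) x _ fun n => MultiNorm.norm_le_mbSet hB.ne (hx n)
  have hT : (⨆ (k : ℕ) (a : Fin k → lp (fun _ : ℕ => ℂ) 1) (_ : (⨆ i, ‖a i‖) ≤ 1),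
      ENNReal.ofReal (M.toFun k fun i => T (a i))) < ⊤ := by
    refine lt_of_le_of_lt (b := ENNReal.ofReal (M.mbSet B).toReal) ?_ ENNReal.ofReal_lt_top
    refine iSup_le fun k => iSup₂_le fun a ha => ENNReal.ofReal_le_ofReal ?_
    have ha' : ∀ i, ‖a i‖ ≤ 1 := fun i => (le_ciSup (Finite.bddAbove_range _) i).trans ha
    exact MultiNorm.toFun_tsumSmulCLM_le hB.ne hx ha'
  have hxT : ∀ n, toWeakSpace ℂ E (x n) ∈ toWeakSpace ℂ E '' (T '' Metric.closedBall 0 1) :=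
    fun n => mem_image_of_mem _
      ⟨lp.single 1 n 1, by simp [lp.norm_single], lp.tsumSmulCLM_single _ n⟩
  obtain ⟨z, -, hz⟩ := (h T hT).exists_mapClusterPt_of_frequently (l := atTop)
    (.of_forall fun n => subset_closure (hxT n))
  exact ⟨z, hz⟩
end

section
/- Let E be a complex Banach space, take p,q with 1 ≤ p ≤ q < ∞, and let (Ω,μ) be a measure space such that L^p(Ω) is infinite-dimensional. Then for every n ∈ ℕ and x₁,…,xₙ ∈ E, ‖(x₁,…,xₙ)‖ₙ^{(p,q)} = sup{‖(Tx₁,…,Txₙ)‖ₙ^{[q]} : T ∈ B(E, L^p(Ω)), ‖T‖ ≤ 1}; that is, the extension to E of the standard q-multi-norm on L^p(Ω) is exactly the (p,q)-multi-norm on E. -/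
/-!
Both sides are suprema of the same set of numbers. A tuple `λ` with `μ_{p,n}(λ) ≤ 1` is exactly
a contraction `z ↦ (λᵢ z)ᵢ` from `E` to `ℓᵖₙ`, and `ℓᵖₙ` embeds isometrically into `Lᵖ(Ω)` as the
span of normalised indicators of `n` disjoint sets of finite positive measure (this is where the
infinite-dimensionality of `Lᵖ(Ω)` enters). The resulting contraction `T : E → Lᵖ(Ω)` satisfies
`‖χ_{Yᵢ} T xᵢ‖ = |λᵢ xᵢ|` for a partition `Yᵢ` enlarging these sets. Conversely, for a
contraction `T` and a partition `X`, the functionals `λᵢ = φᵢ ∘ χ_{Xᵢ} ∘ T`, with `φᵢ` norming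
`χ_{Xᵢ} T xᵢ`, have `μ_{p,n}(λ) ≤ 1` because `Σᵢ ‖χ_{Xᵢ} f‖ᵖ = ‖f‖ᵖ`, and `|λᵢ xᵢ| = ‖χ_{Xᵢ} T xᵢ‖`.
-/

open MeasureTheory NormedSpace
open scoped ENNReal

variable {E : Type*} [NormedAddCommGroup E] [NormedSpace ℂ E]

/-- The weak `p`-summing norm `μ_{p,n}` of a tuple of functionals on `E`,
computed over the unit ball of `E`. -/
noncomputable def muPN (p : ℝ) {n : ℕ} (lam : Fin n → StrongDual ℂ E) : ℝ :=
  sSup {r : ℝ | ∃ x : E, ‖x‖ ≤ 1 ∧ r = (∑ i, ‖lam i x‖ ^ p) ^ (1 / p)}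

/-- The `(p,q)`-multi-norm of a tuple `(x₁,…,xₙ)` in `E`. -/
noncomputable def pqNorm (p q : ℝ) {n : ℕ} (x : Fin n → E) : ℝ :=
  sSup {r : ℝ | ∃ lam : Fin n → StrongDual ℂ E, muPN p lam ≤ 1 ∧
    r = (∑ i, ‖lam i (x i)‖ ^ q) ^ (1 / q)}

/-- The standard `q`-multi-norm of a tuple in `L^p(Ω)`: the supremum over measurable
partitions `{X₁,…,Xₙ}` of `Ω` of `(Σᵢ ‖χ_{Xᵢ} gᵢ‖_p^q)^{1/q}`. -/
noncomputable def stdQNorm {α : Type*} [MeasurableSpace α] (μ : Measure α)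
    (pe : ℝ≥0∞) (q : ℝ) {n : ℕ} (g : Fin n → Lp ℂ pe μ) : ℝ :=
  sSup {r : ℝ | ∃ X : Fin n → Set α,
    (∀ i, MeasurableSet (X i)) ∧ Pairwise (Function.onFun Disjoint X) ∧
    (⋃ i, X i) = Set.univ ∧
    r = (∑ i, (eLpNorm (g i) pe (μ.restrict (X i))).toReal ^ q) ^ (1 / q)}

lemma csSup_eq_csSup_csSup_of_cover {β : Type*} {S : Set ℝ} {P : β → Prop}
    {R : β → Set ℝ} (hP : ∃ b, P b) (hR : ∀ b, P b → (R b).Nonempty) (hS : BddAbove S)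
    (hSR : ∀ r ∈ S, ∃ b, P b ∧ r ∈ R b) (hRS : ∀ b, P b → R b ⊆ S) :
    sSup S = sSup {r | ∃ b, P b ∧ r = sSup (R b)} := by
  obtain ⟨b₀, hb₀⟩ := hP
  have hsup_le : ∀ b, P b → sSup (R b) ≤ sSup S := fun b hb =>
    csSup_le_csSup hS (hR b hb) (hRS b hb)
  have hbdd : BddAbove {r | ∃ b, P b ∧ r = sSup (R b)} := by
    refine ⟨sSup S, ?_⟩
    rintro r ⟨b, hb, rfl⟩
    exact hsup_le b hb
  refine le_antisymm (csSup_le ((hR b₀ hb₀).mono (hRS b₀ hb₀)) fun r hr => ?_)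
    (csSup_le ⟨_, b₀, hb₀, rfl⟩ ?_)
  · obtain ⟨b, hb, hrb⟩ := hSR r hr
    exact (le_csSup (hS.mono (hRS b hb)) hrb).trans (le_csSup hbdd ⟨b, hb, rfl⟩)
  · rintro r ⟨b, hb, rfl⟩
    exact hsup_le b hb

section WeakSumming

variable {p : ℝ} [Fact (1 ≤ ENNReal.ofReal p)] {n : ℕ}

lemma one_le_of_fact_one_le_ofReal : 1 ≤ p := ENNReal.one_le_ofReal.1 Fact.out

lemma pos_of_fact_one_le_ofReal : 0 < p := one_pos.trans_le one_le_of_fact_one_le_ofReal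

variable (p) in
noncomputable def toPiLpCLM (lam : Fin n → StrongDual ℂ E) :
    E →L[ℂ] PiLp (ENNReal.ofReal p) (fun _ : Fin n => ℂ) :=
  (PiLp.continuousLinearEquiv _ ℂ _).symm.toContinuousLinearMap.comp
    (ContinuousLinearMap.pi lam)

lemma norm_toPiLpCLM_apply (lam : Fin n → StrongDual ℂ E) (z : E) :
    ‖toPiLpCLM p lam z‖ = (∑ i, ‖lam i z‖ ^ p) ^ (1 / p) := by
  have hp : 0 < p := pos_of_fact_one_le_ofReal
  rw [PiLp.norm_eq_sum (by rwa [ENNReal.toReal_ofReal hp.le]), ENNReal.toReal_ofReal hp.le]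
  rfl

lemma muPN_eq_norm_toPiLpCLM (lam : Fin n → StrongDual ℂ E) :
    muPN p lam = ‖toPiLpCLM p lam‖ := by
  rw [← ContinuousLinearMap.sSup_unitClosedBall_eq_norm, muPN]
  congr 1
  ext r
  simp [norm_toPiLpCLM_apply, eq_comm]

lemma muPN_le_one_iff (lam : Fin n → StrongDual ℂ E) :
    muPN p lam ≤ 1 ↔ ∀ z, ∑ i, ‖lam i z‖ ^ p ≤ ‖z‖ ^ p := by
  have hp : 0 < p := pos_of_fact_one_le_ofReal
  rw [muPN_eq_norm_toPiLpCLM, ContinuousLinearMap.opNorm_le_iff zero_le_one]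
  refine forall_congr' fun z => ?_
  rw [one_mul, norm_toPiLpCLM_apply, ← Real.rpow_le_rpow_iff (by positivity) (norm_nonneg z) hp,
    ← Real.rpow_mul (by positivity), one_div_mul_cancel hp.ne', Real.rpow_one]

lemma norm_apply_le_of_muPN_le_one {lam : Fin n → StrongDual ℂ E} (h : muPN p lam ≤ 1)
    (i : Fin n) (z : E) : ‖lam i z‖ ≤ ‖z‖ :=
  calc ‖lam i z‖ = ‖toPiLpCLM p lam z i‖ := rfl
    _ ≤ ‖toPiLpCLM p lam z‖ := PiLp.norm_apply_le _ i
    _ ≤ 1 * ‖z‖ :=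
      (toPiLpCLM p lam).le_of_opNorm_le (muPN_eq_norm_toPiLpCLM (p := p) lam ▸ h) z
    _ = ‖z‖ := one_mul _

end WeakSumming

section Restriction

variable {α : Type*} [MeasurableSpace α] {μ : Measure α}

lemma exists_partition_superset {ι : Type*} [Countable ι] [Nonempty ι] {X : ι → Set α}
    (hXm : ∀ i, MeasurableSet (X i)) (hXd : Pairwise (Function.onFun Disjoint X)) :
    ∃ Y : ι → Set α, (∀ i, MeasurableSet (Y i)) ∧
      Pairwise (Function.onFun Disjoint Y) ∧ (⋃ i, Y i) = Set.univ ∧ ∀ i, X i ⊆ Y i := by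
  classical
  let i₀ : ι := Classical.arbitrary ι
  let Y : ι → Set α := fun i => if i = i₀ then X i ∪ (⋃ j, X j)ᶜ else X i
  refine ⟨Y, fun i => ?_, fun i j hij => ?_, ?_, fun i => ?_⟩
  · dsimp only [Y]
    split_ifs
    exacts [(hXm i).union (MeasurableSet.iUnion hXm).compl, hXm i]
  · have hX := Set.disjoint_left.1 (hXd hij)
    refine Set.disjoint_left.2 fun a hai haj => ?_
    dsimp only [Y] at hai haj
    split_ifs at hai haj with hi hj hj
    · exact hij (hi.trans hj.symm)
    · exact hai.elim (hX · haj) (· (Set.mem_iUnion.2 ⟨j, haj⟩))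
    · exact haj.elim (hX hai) (· (Set.mem_iUnion.2 ⟨i, hai⟩))
    · exact hX hai haj
  · refine Set.eq_univ_of_forall fun a => ?_
    by_cases ha : a ∈ ⋃ j, X j
    · obtain ⟨j, hj⟩ := Set.mem_iUnion.1 ha
      refine Set.mem_iUnion.2 ⟨j, ?_⟩
      dsimp only [Y]
      split_ifs
      exacts [Or.inl hj, hj]
    · exact Set.mem_iUnion.2 ⟨i₀, by dsimp only [Y]; rw [if_pos rfl]; exact Or.inr ha⟩
  · dsimp only [Y]
    split_ifs
    exacts [Set.subset_union_left, subset_rfl]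

lemma sum_eLpNorm_restrict_rpow {ε : Type*} [TopologicalSpace ε] [ContinuousENorm ε]
    {ι : Type*} [Fintype ι] {X : ι → Set α} (hXm : ∀ i, MeasurableSet (X i))
    (hXd : Pairwise (Function.onFun Disjoint X)) (hXu : (⋃ i, X i) = Set.univ)
    (f : α → ε) {p : NNReal} (hp : p ≠ 0) :
    ∑ i, eLpNorm f p (μ.restrict (X i)) ^ (p : ℝ) = eLpNorm f p μ ^ (p : ℝ) := by
  simp only [eLpNorm_nnreal_pow_eq_lintegral hp]
  conv_rhs => rw [← Measure.restrict_univ (μ := μ), ← hXu, Measure.restrict_iUnion hXd hXm,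
    lintegral_sum_measure, tsum_fintype]

variable {pe : ℝ≥0∞}

lemma eLpNorm_indicatorConstLp_restrict {X : Set α} (hX : MeasurableSet X) (hμX : μ X ≠ ∞)
    (c : ℂ) (s : Set α) :
    eLpNorm (indicatorConstLp pe hX hμX c) pe (μ.restrict s)
      = eLpNorm (fun _ => c) pe (μ.restrict (X ∩ s)) := by
  rw [eLpNorm_congr_ae (ae_restrict_of_ae indicatorConstLp_coeFn),
    eLpNorm_indicator_eq_eLpNorm_restrict hX, Measure.restrict_restrict hX]

lemma norm_indicatorConstLp_rpow_neg_inv (hpe : pe ≠ 0) {X : Set α} (hX : MeasurableSet X)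
    (hμX : μ X ≠ ∞) (hμX₀ : μ X ≠ 0) :
    ‖indicatorConstLp pe hX hμX ((μ.real X ^ (-(1 / pe.toReal)) : ℝ) : ℂ)‖ = 1 := by
  have hpos : 0 < μ.real X := ENNReal.toReal_pos hμX₀ hμX
  rw [norm_indicatorConstLp' hpe hμX₀, Complex.norm_real, Real.norm_of_nonneg (by positivity),
    ← Real.rpow_add hpos, neg_add_cancel, Real.rpow_zero]

variable [Fact (1 ≤ pe)]

lemma norm_LpToLpRestrictCLM_apply (s : Set α) (f : Lp ℂ pe μ) :
    ‖LpToLpRestrictCLM α ℂ ℂ μ pe s f‖ = (eLpNorm f pe (μ.restrict s)).toReal := by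
  rw [Lp.norm_def, eLpNorm_congr_ae (LpToLpRestrictCLM_coeFn ℂ s f)]

lemma LpToLpRestrictCLM_indicatorConstLp_of_disjoint {X s : Set α} (hX : MeasurableSet X)
    (hμX : μ X ≠ ∞) (c : ℂ) (h : Disjoint X s) :
    LpToLpRestrictCLM α ℂ ℂ μ pe s (indicatorConstLp pe hX hμX c) = 0 := by
  rw [← norm_eq_zero, norm_LpToLpRestrictCLM_apply, eLpNorm_indicatorConstLp_restrict,
    h.inter_eq, Measure.restrict_empty, eLpNorm_measure_zero, ENNReal.toReal_zero]

lemma norm_LpToLpRestrictCLM_indicatorConstLp_of_subset {X s : Set α} (hX : MeasurableSet X)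
    (hμX : μ X ≠ ∞) (c : ℂ) (h : X ⊆ s) :
    ‖LpToLpRestrictCLM α ℂ ℂ μ pe s (indicatorConstLp pe hX hμX c)‖
      = ‖indicatorConstLp pe hX hμX c‖ := by
  rw [norm_LpToLpRestrictCLM_apply, eLpNorm_indicatorConstLp_restrict, Set.inter_eq_left.2 h,
    Lp.norm_def, eLpNorm_congr_ae indicatorConstLp_coeFn,
    eLpNorm_indicator_eq_eLpNorm_restrict hX]

lemma norm_LpToLpRestrictCLM_sum_smulRight {n : ℕ} (lam : Fin n → StrongDual ℂ E)
    (f : Fin n → Lp ℂ pe μ) {s : Set α} {j : Fin n}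
    (h₀ : ∀ i, i ≠ j → LpToLpRestrictCLM α ℂ ℂ μ pe s (f i) = 0)
    (h₁ : ‖LpToLpRestrictCLM α ℂ ℂ μ pe s (f j)‖ = 1) (z : E) :
    ‖LpToLpRestrictCLM α ℂ ℂ μ pe s ((∑ i, (lam i).smulRight (f i)) z)‖
      = ‖lam j z‖ := by
  rw [sum_apply, map_sum, Finset.sum_eq_single j (fun i _ hi => by
    rw [ContinuousLinearMap.smulRight_apply, map_smul, h₀ i hi, smul_zero]) (by simp),
    ContinuousLinearMap.smulRight_apply, map_smul, norm_smul, h₁, mul_one]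

end Restriction

section Contraction

variable {α : Type*} [MeasurableSpace α] {μ : Measure α}
  {p : ℝ} [Fact (1 ≤ ENNReal.ofReal p)]

local notation "χ[" s "]" => LpToLpRestrictCLM α ℂ ℂ μ (ENNReal.ofReal p) s

lemma sum_norm_LpToLpRestrictCLM_rpow {ι : Type*} [Fintype ι] {X : ι → Set α}
    (hXm : ∀ i, MeasurableSet (X i)) (hXd : Pairwise (Function.onFun Disjoint X))
    (hXu : (⋃ i, X i) = Set.univ) (f : Lp ℂ (ENNReal.ofReal p) μ) :
    ∑ i, ‖χ[X i] f‖ ^ p = ‖f‖ ^ p := by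
  have hp : 0 < p := pos_of_fact_one_le_ofReal
  have key := sum_eLpNorm_restrict_rpow (μ := μ) hXm hXd hXu f (p := p.toNNReal)
    (by simpa using hp)
  rw [Real.coe_toNNReal _ hp.le] at key
  have hfin : ∀ i, eLpNorm f (ENNReal.ofReal p) (μ.restrict (X i)) ^ p ≠ ∞ := fun i =>
    ENNReal.rpow_ne_top_of_nonneg hp.le
      (ne_top_of_le_ne_top (Lp.eLpNorm_ne_top f)
        (eLpNorm_mono_measure _ Measure.restrict_le_self))
  simp only [norm_LpToLpRestrictCLM_apply, Lp.norm_def (f := f), ENNReal.toReal_rpow]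
  rw [← ENNReal.toReal_sum fun i _ => hfin i]
  exact congrArg ENNReal.toReal key

lemma exists_norm_le_one_of_muPN_le_one {n : ℕ} (hn : 0 < n)
    (hX : ∃ X : Fin n → Set α, (∀ i, MeasurableSet (X i)) ∧
      Pairwise (Function.onFun Disjoint X) ∧ ∀ i, 0 < μ (X i) ∧ μ (X i) < ∞)
    {lam : Fin n → StrongDual ℂ E} (hlam : muPN p lam ≤ 1) :
    ∃ T : E →L[ℂ] Lp ℂ (ENNReal.ofReal p) μ, ‖T‖ ≤ 1 ∧
      ∃ Y : Fin n → Set α, (∀ i, MeasurableSet (Y i)) ∧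
        Pairwise (Function.onFun Disjoint Y) ∧ (⋃ i, Y i) = Set.univ ∧
        ∀ j z, ‖χ[Y j] (T z)‖ = ‖lam j z‖ := by
  have hp : 0 < p := pos_of_fact_one_le_ofReal
  have hpe : ENNReal.ofReal p ≠ 0 := ENNReal.ofReal_pos.2 hp |>.ne'
  obtain ⟨X, hXm, hXd, hXμ⟩ := hX
  have : Nonempty (Fin n) := Fin.pos_iff_nonempty.1 hn
  obtain ⟨Y, hYm, hYd, hYu, hXY⟩ := exists_partition_superset hXm hXd
  let f : Fin n → Lp ℂ (ENNReal.ofReal p) μ := fun i =>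
    indicatorConstLp _ (hXm i) (hXμ i).2.ne
      ((μ.real (X i) ^ (-(1 / (ENNReal.ofReal p).toReal)) : ℝ) : ℂ)
  let T := ∑ i, (lam i).smulRight (f i)
  have hTY : ∀ j z, ‖χ[Y j] (T z)‖ = ‖lam j z‖ := fun j =>
    norm_LpToLpRestrictCLM_sum_smulRight lam f
      (fun i hij => LpToLpRestrictCLM_indicatorConstLp_of_disjoint _ _ _
        ((hYd hij).mono_left (hXY i)))
      (by rw [norm_LpToLpRestrictCLM_indicatorConstLp_of_subset _ _ _ (hXY j),
        norm_indicatorConstLp_rpow_neg_inv hpe _ _ (hXμ j).1.ne'])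
  refine ⟨T, T.opNorm_le_bound zero_le_one fun z => ?_, Y, hYm, hYd, hYu, hTY⟩
  rw [one_mul, ← Real.rpow_le_rpow_iff (norm_nonneg _) (norm_nonneg _) hp,
    ← sum_norm_LpToLpRestrictCLM_rpow hYm hYd hYu]
  simp only [hTY]
  exact (muPN_le_one_iff lam).1 hlam z

lemma exists_muPN_le_one_of_norm_le_one {n : ℕ} {T : E →L[ℂ] Lp ℂ (ENNReal.ofReal p) μ}
    (hT : ‖T‖ ≤ 1) {X : Fin n → Set α} (hXm : ∀ i, MeasurableSet (X i))
    (hXd : Pairwise (Function.onFun Disjoint X)) (hXu : (⋃ i, X i) = Set.univ) (x : Fin n → E) :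
    ∃ lam : Fin n → StrongDual ℂ E, muPN p lam ≤ 1 ∧
      ∀ i, ‖lam i (x i)‖ = ‖χ[X i] (T (x i))‖ := by
  have hp : 0 < p := pos_of_fact_one_le_ofReal
  choose g hg hgx using fun i => exists_dual_vector'' ℂ (χ[X i] (T (x i)))
  refine ⟨fun i => (g i).comp ((χ[X i]).comp T), (muPN_le_one_iff _).2 fun z => ?_,
    fun i => by simp [hgx i]⟩
  calc ∑ i, ‖g i (χ[X i] (T z))‖ ^ p ≤ ∑ i, ‖χ[X i] (T z)‖ ^ p := by
        gcongr with i
        exact ((g i).le_of_opNorm_le (hg i) _).trans_eq (one_mul _)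
    _ = ‖T z‖ ^ p := sum_norm_LpToLpRestrictCLM_rpow hXm hXd hXu _
    _ ≤ ‖z‖ ^ p := by
        gcongr
        exact (T.le_of_opNorm_le hT z).trans_eq (one_mul _)

end Contraction

theorem extension_of_standard_q_multinorm_eq_pq_multinorm_general
    {α : Type*} [MeasurableSpace α] (μ : Measure α)
    (p q : ℝ) (hpq : p ≤ q) [Fact (1 ≤ ENNReal.ofReal p)]
    (hdim : ∀ m : ℕ, ∃ X : Fin m → Set α, (∀ i, MeasurableSet (X i)) ∧
      Pairwise (Function.onFun Disjoint X) ∧ ∀ i, 0 < μ (X i) ∧ μ (X i) < ∞)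
    (n : ℕ) (hn : 0 < n) (x : Fin n → E) :
    pqNorm p q x
      = sSup {r : ℝ | ∃ T : E →L[ℂ] Lp ℂ (ENNReal.ofReal p) μ, ‖T‖ ≤ 1 ∧
          r = stdQNorm μ (ENNReal.ofReal p) q (fun i => T (x i))} := by
  have hq : 0 < q := one_pos.trans_le (one_le_of_fact_one_le_ofReal.trans hpq)
  unfold pqNorm stdQNorm
  refine csSup_eq_csSup_csSup_of_cover ⟨0, by simp⟩ (fun T _ => ?_) ?_ ?_ ?_
  · have : Nonempty (Fin n) := Fin.pos_iff_nonempty.1 hn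
    obtain ⟨X, hXm, hXd, hXu, -⟩ :=
      exists_partition_superset (X := fun _ : Fin n => (∅ : Set α)) (fun _ => .empty)
        fun _ _ _ => by simp
    exact ⟨_, X, hXm, hXd, hXu, rfl⟩
  · refine ⟨(∑ i, ‖x i‖ ^ q) ^ (1 / q), ?_⟩
    rintro r ⟨lam, hlam, rfl⟩
    gcongr with i
    exact norm_apply_le_of_muPN_le_one hlam i (x i)
  · rintro r ⟨lam, hlam, rfl⟩
    obtain ⟨T, hT, Y, hYm, hYd, hYu, hTY⟩ :=
      exists_norm_le_one_of_muPN_le_one hn (hdim n) hlam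
    exact ⟨T, hT, Y, hYm, hYd, hYu, by simp only [← norm_LpToLpRestrictCLM_apply, hTY]⟩
  · rintro T hT r ⟨X, hXm, hXd, hXu, rfl⟩
    obtain ⟨lam, hlam, hval⟩ := exists_muPN_le_one_of_norm_le_one hT hXm hXd hXu x
    exact ⟨lam, hlam, by simp only [← norm_LpToLpRestrictCLM_apply, hval]⟩

/-- for a complex Banach space `E`, `1 ≤ p ≤ q < ∞`, and a measure space
`(Ω,μ)` with `L^p(Ω)` infinite-dimensional, the extension to `E` of the standard
`q`-multi-norm on `L^p(Ω)` is exactly the `(p,q)`-multi-norm on `E`. -/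
theorem extension_of_standard_q_multinorm_eq_pq_multinorm
    [CompleteSpace E]
    {α : Type*} [MeasurableSpace α] (μ : Measure α)
    (p q : ℝ) (hp : 1 ≤ p) (hpq : p ≤ q) [Fact (1 ≤ ENNReal.ofReal p)]
    (hdim : ∀ m : ℕ, ∃ X : Fin m → Set α, (∀ i, MeasurableSet (X i)) ∧
      Pairwise (Function.onFun Disjoint X) ∧ ∀ i, 0 < μ (X i) ∧ μ (X i) < ∞)
    (n : ℕ) (hn : 0 < n) (x : Fin n → E) :
    pqNorm p q x
      = sSup {r : ℝ | ∃ T : E →L[ℂ] Lp ℂ (ENNReal.ofReal p) μ, ‖T‖ ≤ 1 ∧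
          r = stdQNorm μ (ENNReal.ofReal p) q (fun i => T (x i))} :=
  extension_of_standard_q_multinorm_eq_pq_multinorm_general μ p q hpq hdim n hn x
end
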